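/- arXiv:2006.02315 — 2 statements merged into one kernel-verified Lean document; each statement's English description precedes it below -/
import Mathlib

section
/- Let Ḡ be a Kempf monoid with zero over a field k and let X = Spec(A) be an affine Ḡ_k̄-scheme such that the induced action of the Kempf torus on X is trivial. Then the Ḡ_k̄-action on X is trivial. -/
/-!
Algebraic core: affine algebraic monoids over a field `k` encoded via their
coordinate (commutative) bialgebras, with the functor of points on commutative
`k`-algebras; actions on affine schemes via coactions on coordinate rings.
-/

open TensorProduct

noncomputable section

namespace BBAlg

variable (k : Type) [Field k]

/-- The algebraic closure of `k`. -/
abbrev Kb := AlgebraicClosure k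

variable (H : Type) [CommRing H] [Bialgebra k H]

/-- The convolution product of two `R`-points of `Spec H`, i.e. the product of
points in the monoid scheme `Spec H`. -/
def conv {R : Type} [CommRing R] [Algebra k R] (x y : H →ₐ[k] R) : H →ₐ[k] R :=
  (Algebra.TensorProduct.lmul' k).comp
    ((Algebra.TensorProduct.map x y).comp (Bialgebra.comulAlgHom k H))

/-- The identity `R`-point of the monoid scheme `Spec H`. -/
def onePt (R : Type) [CommRing R] [Algebra k R] : H →ₐ[k] R :=
  (Algebra.ofId k R).comp (Bialgebra.counitAlgHom k H)

/-- `Spec H` is a geometrically integral affine variety over `k`. -/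
structure IsAffAlgVariety : Prop where
  finiteType : Algebra.FiniteType k H
  geomIntegral : IsDomain (Kb k ⊗[k] H)

/-- A zero element for the monoid scheme `Spec H`: an absorbing `k`-point. -/
structure ZeroPt where
  z : H →ₐ[k] k
  absorb_left : ∀ (R : Type) [CommRing R] [Algebra k R] (x : H →ₐ[k] R),
    conv k H ((Algebra.ofId k R).comp z) x = (Algebra.ofId k R).comp z
  absorb_right : ∀ (R : Type) [CommRing R] [Algebra k R] (x : H →ₐ[k] R),
    conv k H x ((Algebra.ofId k R).comp z) = (Algebra.ofId k R).comp z

variable (L : Type) [CommRing L] [HopfAlgebra k L]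

/-- The unit group of the affine monoid `Spec H`: a Hopf algebra `L` with a
bialgebra map `φ : H →ₐ L` inducing an open immersion `Spec L ↪ Spec H` whose
points are exactly the invertible points of `Spec H`. -/
structure UnitGroupAlg where
  φ : H →ₐ[k] L
  comul_compat : (Algebra.TensorProduct.map φ φ).comp (Bialgebra.comulAlgHom k H) =
    (Bialgebra.comulAlgHom k L).comp φ
  counit_compat : (Bialgebra.counitAlgHom k L).comp φ = Bialgebra.counitAlgHom k H
  openImmersion :
    AlgebraicGeometry.IsOpenImmersion (AlgebraicGeometry.Spec.map (CommRingCat.ofHom φ.toRingHom))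
  units_iff : ∀ (R : Type) [CommRing R] [Algebra k R] (x : H →ₐ[k] R),
    (∃ y : H →ₐ[k] R, conv k H x y = onePt k H R ∧ conv k H y x = onePt k H R) ↔
      ∃ xt : L →ₐ[k] R, xt.comp φ = x

/-- A Kempf structure on the affine algebraic monoid `Spec H` with zero `z0`
and unit group `Spec L`: a central one-parameter subgroup `𝔾ₘ,k̄ → Z(G)` whose
induced map to `Spec H ⊗ k̄` extends to the affine line sending `0` to the zero
point.  It is encoded via the functor of points on (`k̄`-)algebras: the
`R`-points of `𝔸¹_k̄` are the elements of `R`, the `R`-points of `𝔾ₘ,k̄` are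
the units of `R`. -/
structure KempfAlg (U : UnitGroupAlg k H L) (z0 : ZeroPt k H) where
  κ : ∀ (R : Type) [CommRing R] [Algebra k R] [Algebra (Kb k) R]
    [IsScalarTower k (Kb k) R], R → (H →ₐ[k] R)
  κ_natural : ∀ (R R' : Type) [CommRing R] [Algebra k R] [Algebra (Kb k) R]
    [IsScalarTower k (Kb k) R] [CommRing R'] [Algebra k R'] [Algebra (Kb k) R']
    [IsScalarTower k (Kb k) R'] (f : R →ₐ[Kb k] R') (s : R),
    κ R' (f s) = (f.restrictScalars k).comp (κ R s)
  κ_one : ∀ (R : Type) [CommRing R] [Algebra k R] [Algebra (Kb k) R]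
    [IsScalarTower k (Kb k) R], κ R 1 = onePt k H R
  κ_zero : ∀ (R : Type) [CommRing R] [Algebra k R] [Algebra (Kb k) R]
    [IsScalarTower k (Kb k) R], κ R 0 = (Algebra.ofId k R).comp z0.z
  κ_mul : ∀ (R : Type) [CommRing R] [Algebra k R] [Algebra (Kb k) R]
    [IsScalarTower k (Kb k) R] (s t : R), IsUnit s → IsUnit t →
    κ R (s * t) = conv k H (κ R s) (κ R t)
  κ_unit : ∀ (R : Type) [CommRing R] [Algebra k R] [Algebra (Kb k) R]
    [IsScalarTower k (Kb k) R] (s : R), IsUnit s →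
    ∃ xt : L →ₐ[k] R, xt.comp U.φ = κ R s
  κ_central : ∀ (R : Type) [CommRing R] [Algebra k R] [Algebra (Kb k) R]
    [IsScalarTower k (Kb k) R] (s : R), IsUnit s → ∀ y : L →ₐ[k] R,
    conv k H (κ R s) (y.comp U.φ) = conv k H (y.comp U.φ) (κ R s)

/-- A coaction of the bialgebra `H` on a commutative `k`-algebra `A`, i.e. an
action of the affine monoid scheme `Spec H` on `Spec A`. -/
structure CoactionOn (A : Type) [CommRing A] [Algebra k A] where
  ρ : A →ₐ[k] H ⊗[k] A
  counit : ∀ a : A,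
    (TensorProduct.map (Bialgebra.counitAlgHom k H).toLinearMap LinearMap.id) (ρ a) =
      (1 : k) ⊗ₜ[k] a
  coassoc : ∀ a : A,
    (TensorProduct.assoc k H H A) ((TensorProduct.map Coalgebra.comul LinearMap.id) (ρ a)) =
      (TensorProduct.map LinearMap.id ρ.toLinearMap) (ρ a)

/-- The action of an `R`-point `g` of `Spec H` on an `R`-point `x` of `Spec A`,
for a coaction `ρ`. -/
def actPt {A : Type} [CommRing A] [Algebra k A] {R : Type} [CommRing R]
    [Algebra k R] (ρ : A →ₐ[k] H ⊗[k] A) (g : H →ₐ[k] R) (x : A →ₐ[k] R) :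
    A →ₐ[k] R :=
  (Algebra.TensorProduct.lmul' k).comp ((Algebra.TensorProduct.map g x).comp ρ)

end BBAlg

namespace BBAlg

variable (k : Type) [Field k] (H : Type) [CommRing H] [Bialgebra k H]

lemma lmul'_map_eq {B C R : Type} [CommRing B] [Algebra k B] [CommRing C] [Algebra k C]
    [CommRing R] [Algebra k R] (φ : B →ₐ[k] R) (ψ : C →ₐ[k] R) (w : B ⊗[k] C) :
    Algebra.TensorProduct.lmul' k (Algebra.TensorProduct.map φ ψ w) =
      (LinearMap.mul' k R) (TensorProduct.map φ.toLinearMap ψ.toLinearMap w) := by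
  induction w using TensorProduct.induction_on with
  | zero => simp
  | tmul b c => simp [Algebra.TensorProduct.lmul'_apply_tmul]
  | add u v hu hv => simp [map_add, hu, hv]

lemma conv_natural {R R' : Type} [CommRing R] [Algebra k R] [CommRing R'] [Algebra k R']
    (f : R →ₐ[k] R') (x y : H →ₐ[k] R) :
    f.comp (conv k H x y) = conv k H (f.comp x) (f.comp y) := by
  apply AlgHom.ext; intro h
  simp only [conv, AlgHom.comp_apply]
  induction (Bialgebra.comulAlgHom k H) h using TensorProduct.induction_on with
  | zero => simp
  | tmul b c => simp [Algebra.TensorProduct.lmul'_apply_tmul]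
  | add u v hu hv => simp only [map_add, hu, hv]

lemma actPt_natural {A R R' : Type} [CommRing A] [Algebra k A] [CommRing R] [Algebra k R]
    [CommRing R'] [Algebra k R'] (ρ : A →ₐ[k] H ⊗[k] A) (f : R →ₐ[k] R')
    (g : H →ₐ[k] R) (x : A →ₐ[k] R) :
    f.comp (actPt k H ρ g x) = actPt k H ρ (f.comp g) (f.comp x) := by
  apply AlgHom.ext; intro a
  simp only [actPt, AlgHom.comp_apply]
  induction ρ a using TensorProduct.induction_on with
  | zero => simp
  | tmul b c => simp [Algebra.TensorProduct.lmul'_apply_tmul]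
  | add u v hu hv => simp only [map_add, hu, hv]

lemma actPt_onePt {A R : Type} [CommRing A] [Algebra k A] [CommRing R] [Algebra k R]
    (c : CoactionOn k H A) (x : A →ₐ[k] R) :
    actPt k H c.ρ (onePt k H R) x = x := by
  apply AlgHom.ext; intro a
  simp only [actPt, AlgHom.comp_apply]
  have aux : ∀ u : H ⊗[k] A,
      Algebra.TensorProduct.lmul' k (Algebra.TensorProduct.map (onePt k H R) x u) =
      ((LinearMap.mul' k R) ∘ₗ
        TensorProduct.map (Algebra.linearMap k R) x.toLinearMap)
        ((TensorProduct.map (Bialgebra.counitAlgHom k H).toLinearMap LinearMap.id) u) := by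
    intro u
    induction u using TensorProduct.induction_on with
    | zero => simp
    | tmul b c =>
      simp [Algebra.TensorProduct.lmul'_apply_tmul, onePt, Algebra.ofId_apply,
        Algebra.linearMap_apply]
    | add u v hu hv => simp only [map_add, hu, hv]
  rw [aux, c.counit a]
  simp [Algebra.linearMap_apply]

lemma actPt_conv {A R : Type} [CommRing A] [Algebra k A] [CommRing R] [Algebra k R]
    (c : CoactionOn k H A) (g h : H →ₐ[k] R) (x : A →ₐ[k] R) :
    actPt k H c.ρ (conv k H g h) x = actPt k H c.ρ g (actPt k H c.ρ h x) := by
  apply AlgHom.ext; intro a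
  set mulR := LinearMap.mul' k R with hmulR
  set M₁ : (H ⊗[k] H) ⊗[k] A →ₗ[k] R :=
    mulR ∘ₗ TensorProduct.map (mulR ∘ₗ TensorProduct.map g.toLinearMap h.toLinearMap)
      x.toLinearMap with hM₁
  set M₂ : H ⊗[k] (H ⊗[k] A) →ₗ[k] R :=
    mulR ∘ₗ TensorProduct.map g.toLinearMap
      (mulR ∘ₗ TensorProduct.map h.toLinearMap x.toLinearMap) with hM₂
  have hM : M₂ ∘ₗ (TensorProduct.assoc k H H A).toLinearMap = M₁ := by
    apply TensorProduct.ext_threefold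
    intro h₁ h₂ a₀
    simp [hM₁, hM₂, hmulR, mul_assoc]
  have aux1 : ∀ u : H ⊗[k] A, Algebra.TensorProduct.lmul' k
      (Algebra.TensorProduct.map (conv k H g h) x u) =
      M₁ ((TensorProduct.map Coalgebra.comul LinearMap.id) u) := by
    intro u
    induction u using TensorProduct.induction_on with
    | zero => simp
    | tmul h₀ a₀ =>
      have h1 : conv k H g h h₀ =
          mulR (TensorProduct.map g.toLinearMap h.toLinearMap (Coalgebra.comul h₀)) := by
        rw [hmulR, ← lmul'_map_eq]
        simp [conv, Bialgebra.comulAlgHom_apply]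
      simp [hM₁, Algebra.TensorProduct.lmul'_apply_tmul, h1, hmulR]
    | add u v hu hv => simp only [map_add, hu, hv]
  have aux2 : ∀ u : H ⊗[k] A, Algebra.TensorProduct.lmul' k
      (Algebra.TensorProduct.map g (actPt k H c.ρ h x) u) =
      M₂ ((TensorProduct.map LinearMap.id c.ρ.toLinearMap) u) := by
    intro u
    induction u using TensorProduct.induction_on with
    | zero => simp
    | tmul h₀ a₀ =>
      have h1 : actPt k H c.ρ h x a₀ =
          mulR (TensorProduct.map h.toLinearMap x.toLinearMap (c.ρ a₀)) := by
        rw [hmulR, ← lmul'_map_eq]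
        simp [actPt]
      simp [hM₂, Algebra.TensorProduct.lmul'_apply_tmul, h1, hmulR]
    | add u v hu hv => simp only [map_add, hu, hv]
  show Algebra.TensorProduct.lmul' k
      (Algebra.TensorProduct.map (conv k H g h) x (c.ρ a)) =
    Algebra.TensorProduct.lmul' k
      (Algebra.TensorProduct.map g (actPt k H c.ρ h x) (c.ρ a))
  rw [aux1, aux2, ← hM, LinearMap.comp_apply]
  exact congrArg M₂ (c.coassoc a)

/-- The `k̄`-algebra-hom version of `actPt` for a `k̄`-linear point `x`. -/
def actPtK {A R : Type} [CommRing A] [Algebra k A] [Algebra (Kb k) A]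
    [IsScalarTower k (Kb k) A] [CommRing R] [Algebra k R] [Algebra (Kb k) R]
    [IsScalarTower k (Kb k) R] (c : CoactionOn k H A)
    (hc : ∀ z : Kb k, c.ρ (algebraMap (Kb k) A z) = 1 ⊗ₜ[k] algebraMap (Kb k) A z)
    (g : H →ₐ[k] R) (x : A →ₐ[Kb k] R) : A →ₐ[Kb k] R :=
  { (actPt k H c.ρ g (x.restrictScalars k)) with
    commutes' := fun z => by
      show actPt k H c.ρ g (x.restrictScalars k) (algebraMap (Kb k) A z) =
        algebraMap (Kb k) R z
      have hx : (x.restrictScalars k) (algebraMap (Kb k) A z) = algebraMap (Kb k) R z :=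
        x.commutes z
      simp only [actPt, AlgHom.comp_apply, hc z, Algebra.TensorProduct.map_tmul,
        Algebra.TensorProduct.lmul'_apply_tmul, map_one, hx, one_mul] }

lemma actPtK_restrictScalars {A R : Type} [CommRing A] [Algebra k A] [Algebra (Kb k) A]
    [IsScalarTower k (Kb k) A] [CommRing R] [Algebra k R] [Algebra (Kb k) R]
    [IsScalarTower k (Kb k) R] (c : CoactionOn k H A)
    (hc : ∀ z : Kb k, c.ρ (algebraMap (Kb k) A z) = 1 ⊗ₜ[k] algebraMap (Kb k) A z)
    (g : H →ₐ[k] R) (x : A →ₐ[Kb k] R) :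
    (actPtK k H c hc g x).restrictScalars k = actPt k H c.ρ g (x.restrictScalars k) :=
  rfl

/-- Key rigidity lemma: under the hypotheses of statement 2, every point `g`
of the monoid acts on every `k̄`-point `x` of `X` the way the zero point does. -/
theorem key_lemma
    (z0 : ZeroPt k H)
    (L : Type) [CommRing L] [HopfAlgebra k L] (U : UnitGroupAlg k H L)
    (κ : KempfAlg k H L U z0)
    (A : Type) [CommRing A] [Algebra k A] [Algebra (Kb k) A]
    [IsScalarTower k (Kb k) A]
    (c : CoactionOn k H A)
    (hc : ∀ x : Kb k, c.ρ (algebraMap (Kb k) A x) = 1 ⊗ₜ[k] algebraMap (Kb k) A x)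
    (htriv : ∀ (R : Type) [CommRing R] [Algebra k R] [Algebra (Kb k) R]
      [IsScalarTower k (Kb k) R] (s : R), IsUnit s → ∀ x : A →ₐ[Kb k] R,
      actPt k H c.ρ (κ.κ R s) (x.restrictScalars k) = x.restrictScalars k)
    (R : Type) [CommRing R] [Algebra k R] [Algebra (Kb k) R] [IsScalarTower k (Kb k) R]
    (g : H →ₐ[k] R) (x : A →ₐ[Kb k] R) :
    actPt k H c.ρ g (x.restrictScalars k) =
      actPt k H c.ρ ((Algebra.ofId k R).comp z0.z) (x.restrictScalars k) := by
  classical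
  set x' := x.restrictScalars k with hx'
  set S := Polynomial R with hS
  set S' := LaurentPolynomial R with hS'
  set ι : R →ₐ[Kb k] S := IsScalarTower.toAlgHom (Kb k) R S with hι
  set f : S →ₐ[Kb k] S' := (Polynomial.toLaurentAlg).restrictScalars (Kb k) with hf
  set e : S →ₐ[Kb k] R := (Polynomial.aeval (R := R) (0 : R)).restrictScalars (Kb k) with he
  set ι' := ι.restrictScalars k with hι'
  set f' := f.restrictScalars k with hf'
  set e' := e.restrictScalars k with he'
  set p : H →ₐ[k] S := conv k H (κ.κ S Polynomial.X) (ι'.comp g) with hp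
  set q : A →ₐ[k] S := actPt k H c.ρ p (ι'.comp x') with hq
  have hfinj : Function.Injective ⇑f' :=
    fun a b hab => Polynomial.toLaurent_injective hab
  have hfX : f Polynomial.X = LaurentPolynomial.T 1 := by
    rw [hf]
    show Polynomial.toLaurentAlg Polynomial.X = _
    rw [Polynomial.toLaurentAlg_apply, Polynomial.toLaurent_X]
  -- step 1 : q = ι' ∘ (g · x)
  have step1 : q = ι'.comp (actPt k H c.ρ g x') := by
    have hκf : f'.comp (κ.κ S Polynomial.X) = κ.κ S' (LaurentPolynomial.T 1) := by
      rw [hf', ← hfX]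
      exact (κ.κ_natural S S' f Polynomial.X).symm
    have h1 : f'.comp q = actPt k H c.ρ (f'.comp p) (f'.comp (ι'.comp x')) :=
      actPt_natural k H c.ρ f' p (ι'.comp x')
    have h2 : f'.comp p =
        conv k H (κ.κ S' (LaurentPolynomial.T 1)) ((f'.comp ι').comp g) := by
      rw [hp, conv_natural, hκf, AlgHom.comp_assoc]
    have hx2 : ((f.comp ι).comp x).restrictScalars k = (f'.comp ι').comp x' := by
      apply AlgHom.ext; intro a; rfl
    have h3 : actPt k H c.ρ ((f'.comp ι').comp g) ((f'.comp ι').comp x') =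
        (actPtK k H c hc ((f'.comp ι').comp g) ((f.comp ι).comp x)).restrictScalars k := by
      rw [actPtK_restrictScalars, hx2]
    have h4 : f'.comp q = actPt k H c.ρ ((f'.comp ι').comp g) ((f'.comp ι').comp x') := by
      rw [h1, h2, ← AlgHom.comp_assoc f' ι' x', actPt_conv, h3,
        htriv S' (LaurentPolynomial.T 1) (LaurentPolynomial.isUnit_T 1)
          (actPtK k H c hc ((f'.comp ι').comp g) ((f.comp ι).comp x)), ← h3]
    have h5 : f'.comp q = f'.comp (ι'.comp (actPt k H c.ρ g x')) := by
      rw [h4, AlgHom.comp_assoc f' ι' g, AlgHom.comp_assoc f' ι' x',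
        ← actPt_natural, ← actPt_natural]
    apply AlgHom.ext; intro a
    exact hfinj (DFunLike.congr_fun h5 a)
  -- step 2 : evaluate at X = 0
  have heι : e'.comp ι' = AlgHom.id k R := by
    apply AlgHom.ext; intro r
    simp [he', he, hι', hι, Polynomial.algebraMap_eq]
  have heX : e Polynomial.X = 0 := by
    rw [he]
    show Polynomial.aeval (R := R) (0 : R) Polynomial.X = 0
    simp
  have hκe : e'.comp (κ.κ S Polynomial.X) = (Algebra.ofId k R).comp z0.z := by
    rw [he']
    have hnat := κ.κ_natural S R e Polynomial.X
    rw [heX, κ.κ_zero] at hnat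
    exact hnat.symm
  have h5 : e'.comp p = (Algebra.ofId k R).comp z0.z := by
    rw [hp, conv_natural, hκe]
    exact z0.absorb_left R _
  have h6 : e'.comp q = actPt k H c.ρ ((Algebra.ofId k R).comp z0.z) x' := by
    rw [hq, actPt_natural, h5, ← AlgHom.comp_assoc, heι, AlgHom.id_comp]
  have h7 : e'.comp (ι'.comp (actPt k H c.ρ g x')) = actPt k H c.ρ g x' := by
    rw [← AlgHom.comp_assoc, heι, AlgHom.id_comp]
  rw [← h7, ← step1, h6]

end BBAlg

open BBAlg TensorProduct in
/-- Let `Ḡ = Spec H` be a Kempf monoid with zero over a field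
`k` and let `X = Spec A` be an affine `Ḡ_k̄`-scheme (given by a coaction of `H`
on the `k̄`-algebra `A`, linear over `k̄`) such that the induced action of the
Kempf torus on `X` is trivial.  Then the `Ḡ_k̄`-action on `X` is trivial
(the coaction is the trivial one, `a ↦ 1 ⊗ a`). -/
theorem statement_2
    (k : Type) [Field k]
    -- the Kempf monoid `Ḡ = Spec H` with zero and unit group `Spec L`:
    (H : Type) [CommRing H] [Bialgebra k H] (hH : IsAffAlgVariety k H)
    (z0 : ZeroPt k H)
    (L : Type) [CommRing L] [HopfAlgebra k L] (U : UnitGroupAlg k H L)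
    (κ : KempfAlg k H L U z0)
    -- an affine `Ḡ_k̄`-scheme `X = Spec A`:
    (A : Type) [CommRing A] [Algebra k A] [Algebra (Kb k) A]
    [IsScalarTower k (Kb k) A]
    (c : CoactionOn k H A)
    -- the coaction is `k̄`-linear (the action is an action of `Ḡ_k̄` on the
    -- `k̄`-scheme `Spec A`):
    (hc : ∀ x : Kb k, c.ρ (algebraMap (Kb k) A x) = 1 ⊗ₜ[k] algebraMap (Kb k) A x)
    -- the action of the Kempf torus on `X` is trivial:
    (htriv : ∀ (R : Type) [CommRing R] [Algebra k R] [Algebra (Kb k) R]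
      [IsScalarTower k (Kb k) R] (s : R), IsUnit s → ∀ x : A →ₐ[Kb k] R,
      actPt k H c.ρ (κ.κ R s) (x.restrictScalars k) = x.restrictScalars k) :
    -- then the `Ḡ_k̄`-action on `X` is trivial:
    ∀ a : A, c.ρ a = 1 ⊗ₜ[k] a := by
  intro a
  set G : H →ₐ[k] A ⊗[k] H := Algebra.TensorProduct.includeRight with hG
  set xK : A →ₐ[Kb k] A ⊗[k] H := Algebra.TensorProduct.includeLeft with hxK
  have h1 := key_lemma k H z0 L U κ A c hc htriv (A ⊗[k] H) G xK
  have h2 := key_lemma k H z0 L U κ A c hc htriv (A ⊗[k] H) (onePt k H (A ⊗[k] H)) xK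
  have h3 : actPt k H c.ρ (onePt k H (A ⊗[k] H)) (xK.restrictScalars k) =
      xK.restrictScalars k := actPt_onePt k H c _
  have h4 : actPt k H c.ρ G (xK.restrictScalars k) = xK.restrictScalars k := by
    rw [h1, ← h2, h3]
  have h5 := DFunLike.congr_fun h4 a
  have hcomm : ∀ u : H ⊗[k] A, Algebra.TensorProduct.lmul' k
      (Algebra.TensorProduct.map G (xK.restrictScalars k) u) =
      (TensorProduct.comm k H A) u := by
    intro u
    induction u using TensorProduct.induction_on with
    | zero => simp
    | tmul h₀ a₀ =>
      simp [hG, hxK, Algebra.TensorProduct.lmul'_apply_tmul,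
        Algebra.TensorProduct.tmul_mul_tmul]
    | add u v hu hv => simp only [map_add, hu, hv]
  have h6 : (TensorProduct.comm k H A) (c.ρ a) =
      (TensorProduct.comm k H A) ((1 : H) ⊗ₜ[k] a) := by
    rw [← hcomm (c.ρ a)]
    rw [TensorProduct.comm_tmul]
    exact h5
  exact (TensorProduct.comm k H A).injective h6
end
end

section
/- Let Ḡ be a Kempf monoid with zero over a field k with unit group G, and let U ↪ X be an open immersion of G-schemes. Then the commutative square formed by U⁺ → U^G, U⁺ → X⁺, X⁺ → X^G, and U^G → X^G (with horizontal maps the limit maps i_∞ and vertical maps induced by the open immersion) is cartesian: U⁺ is the fiber product X⁺ ×_{X^G} U^G. -/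
/-!
Geometric core: monoid schemes, unit groups, Kempf monoids,
actions and Białynicki-Birula functors, all encoded via the functor of points
(families of maps on `T`-points, natural in `T`), which by the Yoneda lemma is
equivalent to the usual definitions via multiplication morphisms.
-/

open CategoryTheory AlgebraicGeometry Limits

noncomputable section

namespace BB

variable (k : Type) [Field k]

/-- `Spec k`. -/
abbrev Speck : Scheme := Spec (CommRingCat.of k)

/-- The category of schemes over `k`. -/
abbrev Sch := Over (Speck k)

/-- The terminal object `Spec k` of `Sch k`. -/
def basePt : Sch k := Over.mk (𝟙 (Speck k))

/-- The structure map to the terminal object. -/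
def toBasePt (T : Sch k) : T ⟶ basePt k := Over.homMk T.hom (by simp [basePt])

/-- The algebraic closure of `k`. -/
abbrev Kb := AlgebraicClosure k

/-- `Spec k̄ ⟶ Spec k`. -/
def bcMap : Speck (Kb k) ⟶ Speck k :=
  Spec.map (CommRingCat.ofHom (algebraMap k (Kb k)))

/-- A `k̄`-scheme viewed as a `k`-scheme. -/
def bcObj (T : Sch (Kb k)) : Sch k := Over.mk (T.hom ≫ bcMap k)

/-- A `k̄`-morphism viewed as a `k`-morphism. -/
def bcHom {T T' : Sch (Kb k)} (f : T' ⟶ T) : bcObj k T' ⟶ bcObj k T :=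
  Over.homMk f.left (by dsimp [bcObj]; rw [← Category.assoc, Over.w])

/-- Restriction of global sections along a morphism of `k̄`-schemes. -/
def res {T T' : Sch (Kb k)} (f : T' ⟶ T) (s : Γ(T.left, ⊤)) : Γ(T'.left, ⊤) :=
  Scheme.Γ.map f.left.op s

/-- A *monoid scheme structure* on a scheme `M` over `k`, encoded via the functor
of points: an associative unital multiplication on `T`-points, natural in `T`.
By the Yoneda lemma this is the same as a monoid structure
`μ : M ×ₖ M ⟶ M`, `1 : Spec k ⟶ M` on `M`. -/
structure MonStr (M : Sch k) where
  mul : ∀ {T : Sch k}, (T ⟶ M) → (T ⟶ M) → (T ⟶ M)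
  one : ∀ T : Sch k, T ⟶ M
  mul_comp : ∀ {T T' : Sch k} (f : T' ⟶ T) (a b : T ⟶ M),
    f ≫ mul a b = mul (f ≫ a) (f ≫ b)
  one_comp : ∀ {T T' : Sch k} (f : T' ⟶ T), f ≫ one T = one T'
  mul_assoc : ∀ {T : Sch k} (a b c : T ⟶ M), mul (mul a b) c = mul a (mul b c)
  one_mul : ∀ {T : Sch k} (a : T ⟶ M), mul (one T) a = a
  mul_one : ∀ {T : Sch k} (a : T ⟶ M), mul a (one T) = a

/-- A (necessarily unique, central) *zero* for a monoid scheme: an absorbing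
`k`-point, encoded as the corresponding natural family of `T`-points. -/
structure ZeroStr {M : Sch k} (m : MonStr k M) where
  zero : ∀ T : Sch k, T ⟶ M
  zero_comp : ∀ {T T' : Sch k} (f : T' ⟶ T), f ≫ zero T = zero T'
  zero_mul : ∀ {T : Sch k} (a : T ⟶ M), m.mul (zero T) a = zero T
  mul_zero : ∀ {T : Sch k} (a : T ⟶ M), m.mul a (zero T) = zero T

/-- A group scheme structure (monoid structure with inverses on points). -/
structure GrpStr (G : Sch k) extends MonStr k G where
  inv : ∀ {T : Sch k}, (T ⟶ G) → (T ⟶ G)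
  inv_comp : ∀ {T T' : Sch k} (f : T' ⟶ T) (a : T ⟶ G), f ≫ inv a = inv (f ≫ a)
  mul_inv : ∀ {T : Sch k} (a : T ⟶ G), mul a (inv a) = one T
  inv_mul : ∀ {T : Sch k} (a : T ⟶ G), mul (inv a) a = one T

/-- `M` is an *algebraic monoid* over `k`: a geometrically integral affine
variety (affine, of finite type over `k`, integral after base change to `k̄`)
together with its monoid structure. -/
structure IsAlgMonoid {M : Sch k} (m : MonStr k M) : Prop where
  affine : IsAffine M.left
  locallyOfFiniteType : LocallyOfFiniteType M.hom
  quasiCompact : QuasiCompact M.hom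
  geomIntegral : AlgebraicGeometry.IsIntegral (pullback M.hom (bcMap k))

/-- The *unit group* of a monoid scheme `M`: an open subgroup scheme
`ι : G ⟶ M` whose `T`-points are exactly the invertible `T`-points of `M`. -/
structure UnitGroup {M : Sch k} (m : MonStr k M) where
  G : Sch k
  grp : GrpStr k G
  ι : G ⟶ M
  openImmersion : IsOpenImmersion ι.left
  ι_mul : ∀ {T : Sch k} (a b : T ⟶ G), grp.mul a b ≫ ι = m.mul (a ≫ ι) (b ≫ ι)
  ι_one : ∀ T : Sch k, grp.one T ≫ ι = m.one T
  mem_range_iff : ∀ {T : Sch k} (a : T ⟶ M),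
    (∃ b : T ⟶ M, m.mul a b = m.one T ∧ m.mul b a = m.one T) ↔ ∃ g : T ⟶ G, g ≫ ι = a

/-- A *Kempf structure* on an algebraic monoid `M` with zero: a central
one-parameter subgroup `𝔾ₘ,k̄ → Z(G)` whose induced map to `M_k̄` extends to
`𝔸¹_k̄ → M_k̄` sending `0` to `0_M`.  It is encoded via the functor of points:
for a `k̄`-scheme `T`, the `T`-points of `𝔸¹_k̄` are the global sections
`Γ(T, O_T)` (and the `T`-points of `𝔾ₘ,k̄` are the units among them), so the
datum is a natural family `κ` as below; multiplicativity and centrality are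
required on units, `κ` sends `0` to `0_M` and `1` to `1_M`, and units land in
the unit group `G`. -/
structure Kempf {M : Sch k} (m : MonStr k M) (z : ZeroStr k m) (U : UnitGroup k m) where
  κ : ∀ (T : Sch (Kb k)), Γ(T.left, ⊤) → (bcObj k T ⟶ M)
  κ_natural : ∀ {T T' : Sch (Kb k)} (f : T' ⟶ T) (s : Γ(T.left, ⊤)),
    κ T' (res k f s) = bcHom k f ≫ κ T s
  κ_one : ∀ T : Sch (Kb k), κ T 1 = m.one _
  κ_zero : ∀ T : Sch (Kb k), κ T 0 = z.zero _
  κ_mul : ∀ (T : Sch (Kb k)) (s t : Γ(T.left, ⊤)), IsUnit s → IsUnit t →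
    κ T (s * t) = m.mul (κ T s) (κ T t)
  κ_unit : ∀ (T : Sch (Kb k)) (s : Γ(T.left, ⊤)), IsUnit s →
    ∃ g : bcObj k T ⟶ U.G, g ≫ U.ι = κ T s
  κ_central : ∀ (T : Sch (Kb k)) (s : Γ(T.left, ⊤)), IsUnit s →
    ∀ g : bcObj k T ⟶ U.G, m.mul (κ T s) (g ≫ U.ι) = m.mul (g ≫ U.ι) (κ T s)

/-- An action of a monoid scheme on a scheme `X` over `k`, via points. -/
structure MonAction {M : Sch k} (m : MonStr k M) (X : Sch k) where
  smul : ∀ {T : Sch k}, (T ⟶ M) → (T ⟶ X) → (T ⟶ X)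
  smul_comp : ∀ {T T' : Sch k} (f : T' ⟶ T) (g : T ⟶ M) (x : T ⟶ X),
    f ≫ smul g x = smul (f ≫ g) (f ≫ x)
  one_smul : ∀ {T : Sch k} (x : T ⟶ X), smul (m.one T) x = x
  mul_smul : ∀ {T : Sch k} (g h : T ⟶ M) (x : T ⟶ X),
    smul (m.mul g h) x = smul g (smul h x)

variable {k}

section BBfunctor

variable {M : Sch k} {m : MonStr k M} (z : ZeroStr k m) (U : UnitGroup k m)
variable {X : Sch k} (act : MonAction k U.grp.toMonStr X)

/-- The left `G`-action on `M ×ₖ T` (by left multiplication on the first factor),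
on points. -/
def gActP {T T' : Sch k} (g : T' ⟶ U.G) (p : T' ⟶ M ⨯ T) : T' ⟶ M ⨯ T :=
  prod.lift (m.mul (g ≫ U.ι) (p ≫ prod.fst)) (p ≫ prod.snd)

/-- A `T`-family `φ : M ×ₖ T ⟶ X` is `G`-equivariant, where `G` acts by left
multiplication on `M` and trivially on `T`. -/
def IsEquivariant {T : Sch k} (φ : M ⨯ T ⟶ X) : Prop :=
  ∀ {T' : Sch k} (g : T' ⟶ U.G) (p : T' ⟶ M ⨯ T),
    gActP U g p ≫ φ = act.smul g (p ≫ φ)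

/-- The value of the Białynicki-Birula functor `X⁺` at `T`:
`G`-equivariant families `φ : M ×ₖ T ⟶ X`. -/
def BBpt (T : Sch k) : Type _ := { φ : M ⨯ T ⟶ X // IsEquivariant U act φ }

/-- Pullback of a Białynicki-Birula family along `f : T' ⟶ T`. -/
def bbPull {T T' : Sch k} (f : T' ⟶ T) (φ : M ⨯ T ⟶ X) : M ⨯ T' ⟶ X :=
  prod.map (𝟙 M) f ≫ φ

/-- The limit (value at `0 × T`) of a family `φ : M ×ₖ T ⟶ X`. -/
def limitOf {T : Sch k} (φ : M ⨯ T ⟶ X) : T ⟶ X :=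
  prod.lift (z.zero T) (𝟙 T) ≫ φ

/-- The restriction of a family `φ : M ×ₖ T ⟶ X` along the unit `1 × T`. -/
def unitOf {T : Sch k} (φ : M ⨯ T ⟶ X) : T ⟶ X :=
  prod.lift (m.one T) (𝟙 T) ≫ φ

/-- A point `x : T ⟶ X` is a fixed point for the `G`-action. -/
def IsFixedPt {T : Sch k} (x : T ⟶ X) : Prop :=
  ∀ {T' : Sch k} (f : T' ⟶ T) (g : T' ⟶ U.G), act.smul g (f ≫ x) = f ≫ x

/-- The value of the fixed-point functor `X^G` at `T`. -/
def FixPt (T : Sch k) : Type _ := { x : T ⟶ X // IsFixedPt U act x }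

end BBfunctor

end BB

/-!
An equivariant family `φ : M × T → X` whose limit lands in the open `G`-stable `U` factors
through `U`; uniqueness is automatic because open immersions are monomorphisms. It suffices to
check points, and every point of `M × T` is a `K`-point `q` for a field `K` over `k̄`. Consider
the curve `t ↦ φ(κ(t) · q)` on `𝔸¹_K`. At `t = 0` it takes the limit value, which lies in `U`;
as `U` is open and the generic point of `𝔸¹_K` specializes to `0`, the generic point also maps
into `U`. There `κ(t)` is a unit `g` of `G`, so by equivariance the curve equals `g · φ(q)`,
and `G`-stability of `U` gives `φ(q) ∈ U`.
-/
namespace BB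

variable {k : Type} [Field k]

section OpenImmersion

variable {S : Scheme} {Y Z X : Over S} (j : Z ⟶ X) [IsOpenImmersion j.left]

instance mono_of_isOpenImmersion_left : Mono j := Over.mono_of_mono_left j

lemma exists_lift_of_range_subset (f : Y ⟶ X)
    (h : Set.range f.left.base ⊆ Set.range j.left.base) : ∃ f' : Y ⟶ Z, f' ≫ j = f :=
  ⟨Over.homMk (IsOpenImmersion.lift j.left f.left h)
      (by rw [← Over.w j, ← Category.assoc, IsOpenImmersion.lift_fac, Over.w]),
    Over.OverMorphism.ext (IsOpenImmersion.lift_fac _ _ _)⟩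

end OpenImmersion

lemma specializes_of_isFractionRing (A L : Type) [CommRing A] [IsDomain A] [Field L]
    [Algebra A L] [IsFractionRing A L] (y : Spec (CommRingCat.of L))
    (p : Spec (CommRingCat.of A)) :
    (Spec.map (CommRingCat.ofHom (algebraMap A L))).base y ⤳ p := by
  have key (y : PrimeSpectrum L) (p : PrimeSpectrum A) :
      PrimeSpectrum.comap (algebraMap A L) y ⤳ p := by
    rw [← PrimeSpectrum.le_iff_specializes, ← PrimeSpectrum.asIdeal_le_asIdeal,
      PrimeSpectrum.comap_asIdeal, Ideal.eq_bot_of_prime y.asIdeal,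
      Ideal.comap_bot_of_injective _ (IsFractionRing.injective A L)]
    exact bot_le
  exact key y p

variable (k) in
def specOver (R : Type) [CommRing R] [Algebra (Kb k) R] : Sch (Kb k) :=
  Over.mk (Spec.map (CommRingCat.ofHom (algebraMap (Kb k) R)))

section SpecOver

variable {R S : Type} [CommRing R] [CommRing S] [Algebra (Kb k) R] [Algebra (Kb k) S]

def specOverMap (f : R →ₐ[Kb k] S) : specOver k S ⟶ specOver k R :=
  Over.homMk (Spec.map (CommRingCat.ofHom f.toRingHom)) (by
    simp only [specOver, Over.mk_hom, ← Spec.map_comp, ← CommRingCat.ofHom_comp]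
    exact congrArg (fun g ↦ Spec.map (CommRingCat.ofHom g)) f.comp_algebraMap)

lemma res_specOverMap_ΓSpecIso_inv (f : R →ₐ[Kb k] S) (a : R) :
    res k (specOverMap f) ((Scheme.ΓSpecIso (CommRingCat.of R)).inv a) =
      (Scheme.ΓSpecIso (CommRingCat.of S)).inv (f a) := by
  dsimp only [res]
  rw [Scheme.Γ_map]
  change ((Scheme.ΓSpecIso _).inv ≫ (Spec.map (CommRingCat.ofHom f.toRingHom)).appTop) a = _
  rw [← Scheme.ΓSpecIso_inv_naturality]
  rfl

end SpecOver

lemma range_comp_subset_of_mem_isOpen {A L : Type} [CommRing A] [IsDomain A] [Field L]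
    [Algebra A L] [IsFractionRing A L] [Algebra (Kb k) A] [Algebra (Kb k) L]
    [IsScalarTower (Kb k) A L] {X : Sch k} (c : bcObj k (specOver k A) ⟶ X)
    {W : Set X.left} (hW : IsOpen W) {p : Spec (CommRingCat.of A)} (hp : c.left.base p ∈ W) :
    Set.range (bcHom k (specOverMap (IsScalarTower.toAlgHom (Kb k) A L)) ≫ c).left.base ⊆ W := by
  rintro _ ⟨y, rfl⟩
  exact ((specializes_of_isFractionRing A L y p).map c.left.continuous).mem_open hW hp

lemma exists_specOver_point (Y : Sch k) (x : Y.left) :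
    ∃ (K : Type) (_ : Field K) (_ : Algebra (Kb k) K) (r : bcObj k (specOver k K) ⟶ Y),
      x ∈ Set.range r.left.base := by
  let K := AlgebraicClosure (Y.left.residueField x)
  let rK : Spec (CommRingCat.of K) ⟶ Y.left :=
    Spec.map (CommRingCat.ofHom (algebraMap (Y.left.residueField x) K)) ≫
      Y.left.fromSpecResidueField x
  let toK : CommRingCat.of k ⟶ CommRingCat.of K := Spec.preimage (rK ≫ Y.hom)
  let _ : Algebra k K := toK.hom.toAlgebra
  let _ : Algebra (Kb k) K := (IsAlgClosed.lift : Kb k →ₐ[k] K).toAlgebra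
  have hK : CommRingCat.ofHom (algebraMap k (Kb k)) ≫ CommRingCat.ofHom (algebraMap (Kb k) K) =
      toK := by
    ext a
    exact (IsAlgClosed.lift : Kb k →ₐ[k] K).commutes a
  refine ⟨K, inferInstance, inferInstance, Over.homMk rK ?_, ?_⟩
  · change rK ≫ Y.hom = Spec.map _ ≫ Spec.map _
    rw [← Spec.map_comp, hK, Spec.map_preimage]
  · obtain ⟨y⟩ : Nonempty (Spec (CommRingCat.of K)) := inferInstance
    exact ⟨y, (Scheme.Hom.comp_apply _ _ _).trans (Scheme.fromSpecResidueField_apply x _)⟩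

section Equivariance

variable {M : Sch k} {m : MonStr k M} {Ug : UnitGroup k m}
  {XU X : Sch k} {actU : MonAction k Ug.grp.toMonStr XU} {actX : MonAction k Ug.grp.toMonStr X}

def IsEquivariantMap (actU : MonAction k Ug.grp.toMonStr XU)
    (actX : MonAction k Ug.grp.toMonStr X) (j : XU ⟶ X) : Prop :=
  ∀ {T : Sch k} (g : T ⟶ Ug.G) (x : T ⟶ XU), actU.smul g x ≫ j = actX.smul g (x ≫ j)

variable (m) in
def leftMul {T T' : Sch k} (a : T' ⟶ M) (p : T' ⟶ M ⨯ T) : T' ⟶ M ⨯ T :=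
  prod.lift (m.mul a (p ≫ prod.fst)) (p ≫ prod.snd)

lemma comp_leftMul {T T' T'' : Sch k} (f : T'' ⟶ T') (a : T' ⟶ M) (p : T' ⟶ M ⨯ T) :
    f ≫ leftMul m a p = leftMul m (f ≫ a) (f ≫ p) := by
  simp only [leftMul, prod.comp_lift, m.mul_comp, Category.assoc]

section Zero

variable (z : ZeroStr k m)

lemma lift_zero_comp {T T' : Sch k} (f : T' ⟶ T) (φ : M ⨯ T ⟶ X) :
    prod.lift (z.zero T') f ≫ φ = f ≫ limitOf z φ := by
  rw [limitOf, ← Category.assoc, prod.comp_lift, Category.comp_id, z.zero_comp]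

lemma leftMul_zero_comp {T T' : Sch k} (p : T' ⟶ M ⨯ T) (φ : M ⨯ T ⟶ X) :
    leftMul m (z.zero T') p ≫ φ = (p ≫ prod.snd) ≫ limitOf z φ := by
  rw [leftMul, z.zero_mul, lift_zero_comp]

lemma isFixedPt_limitOf {T : Sch k} {φ : M ⨯ T ⟶ X} (hφ : IsEquivariant Ug actX φ) :
    IsFixedPt Ug actX (limitOf z φ) := by
  intro T' f g
  have hzero : gActP Ug g (prod.lift (z.zero T') f) = prod.lift (z.zero T') f := by
    rw [gActP, prod.lift_fst, prod.lift_snd, z.mul_zero]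
  rw [← lift_zero_comp, ← hφ g, hzero]

end Zero

variable {j : XU ⟶ X}

lemma IsEquivariant.comp {T : Sch k} {ψ : M ⨯ T ⟶ XU} (hψ : IsEquivariant Ug actU ψ)
    (hj : IsEquivariantMap actU actX j) : IsEquivariant Ug actX (ψ ≫ j) := by
  intro T' g p
  rw [← Category.assoc, hψ g p, hj, Category.assoc]

lemma IsEquivariant.of_comp [Mono j] {T : Sch k} {ψ : M ⨯ T ⟶ XU}
    (hj : IsEquivariantMap actU actX j) (hψj : IsEquivariant Ug actX (ψ ≫ j)) :
    IsEquivariant Ug actU ψ := by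
  intro T' g p
  rw [← cancel_mono j, Category.assoc, hψj g p, hj, Category.assoc]

lemma IsEquivariantMap.eq_smul_inv_comp (hj : IsEquivariantMap actU actX j) {T : Sch k}
    {g : T ⟶ Ug.G} {x : T ⟶ X} {y : T ⟶ XU} (h : actX.smul g x = y ≫ j) :
    x = actU.smul (Ug.grp.inv g) y ≫ j := by
  rw [hj, ← h, ← actX.mul_smul, Ug.grp.inv_mul, actX.one_smul]

end Equivariance

open Polynomial in
lemma range_comp_subset_of_limitOf_eq {M : Sch k} {m : MonStr k M} {z : ZeroStr k m}
    {Ug : UnitGroup k m} (κ : Kempf k m z Ug) {XU X : Sch k}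
    {actU : MonAction k Ug.grp.toMonStr XU} {actX : MonAction k Ug.grp.toMonStr X}
    {j : XU ⟶ X} [IsOpenImmersion j.left] (hj : IsEquivariantMap actU actX j)
    {T : Sch k} {φ : M ⨯ T ⟶ X} (hφ : IsEquivariant Ug actX φ) {u : T ⟶ XU}
    (hu : u ≫ j = limitOf z φ) {K : Type} [Field K] [Algebra (Kb k) K]
    (r : bcObj k (specOver k K) ⟶ M ⨯ T) :
    Set.range (r ≫ φ).left.base ⊆ Set.range j.left.base := by
  let L := FractionRing K[X]
  let C : K →ₐ[Kb k] K[X] := IsScalarTower.toAlgHom (Kb k) K K[X]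
  let η : K[X] →ₐ[Kb k] L := IsScalarTower.toAlgHom (Kb k) K[X] L
  let ev₀ : K[X] →ₐ[Kb k] K := (aeval (0 : K)).restrictScalars (Kb k)
  let q := bcHom k (specOverMap C) ≫ r
  -- `t` is the coordinate of `𝔸¹_K = Spec K[X]`, and `curve` is `t ↦ φ(κ(t) · q)`.
  let t : Γ((specOver k K[X]).left, ⊤) :=
    (Scheme.ΓSpecIso (CommRingCat.of K[X])).inv Polynomial.X
  let curve := leftMul m (κ.κ _ t) q ≫ φ
  have hcurve₀ : bcHom k (specOverMap ev₀) ≫ curve =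
      (bcHom k (specOverMap ev₀) ≫ q ≫ prod.snd) ≫ u ≫ j := by
    have ht : res k (specOverMap ev₀) t = 0 := by
      rw [res_specOverMap_ΓSpecIso_inv, show ev₀ Polynomial.X = 0 by simp [ev₀]]
      exact map_zero _
    rw [← Category.assoc, comp_leftMul, ← κ.κ_natural, ht, κ.κ_zero, leftMul_zero_comp, hu]
    simp only [Category.assoc]
  have htη : IsUnit (res k (specOverMap η) t) := by
    rw [res_specOverMap_ΓSpecIso_inv]
    refine IsUnit.map _ (isUnit_iff_ne_zero.mpr ?_)
    exact (map_ne_zero_iff _ (IsFractionRing.injective K[X] L)).mpr X_ne_zero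
  obtain ⟨g, hg⟩ := κ.κ_unit _ _ htη
  have hcurveη : bcHom k (specOverMap η) ≫ curve =
      actX.smul g ((bcHom k (specOverMap η) ≫ q) ≫ φ) := by
    rw [← Category.assoc, comp_leftMul, ← κ.κ_natural, ← hg]
    exact hφ g _
  obtain ⟨y₀⟩ : Nonempty (Spec (CommRingCat.of K)) := inferInstance
  have hrange := range_comp_subset_of_mem_isOpen (L := L) curve
    (IsOpenImmersion.isOpen_range j.left) ⟨_, congr(($hcurve₀).left.base y₀).symm⟩
  obtain ⟨w, hw⟩ := exists_lift_of_range_subset j _ hrange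
  have hfactor := hj.eq_smul_inv_comp (hcurveη.symm.trans hw.symm)
  rintro _ ⟨y, rfl⟩
  obtain ⟨yL⟩ : Nonempty (bcObj k (specOver k L)).left :=
    inferInstanceAs (Nonempty (Spec (CommRingCat.of L)))
  have hy : (bcHom k (specOverMap η) ≫ bcHom k (specOverMap C)).left.base yL = y :=
    @Subsingleton.elim (Spec (CommRingCat.of K)) inferInstance _ _
  refine ⟨(actU.smul (Ug.grp.inv g) w).left.base yL, ?_⟩
  have hpt := congr(($hfactor).left.base yL)
  simp only [q, Category.assoc, Over.comp_left, Scheme.Hom.comp_apply] at hpt hy ⊢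
  rw [← hpt, hy]

lemma range_subset_of_limitOf_eq {M : Sch k} {m : MonStr k M} {z : ZeroStr k m}
    {Ug : UnitGroup k m} (κ : Kempf k m z Ug) {XU X : Sch k}
    {actU : MonAction k Ug.grp.toMonStr XU} {actX : MonAction k Ug.grp.toMonStr X}
    {j : XU ⟶ X} [IsOpenImmersion j.left] (hj : IsEquivariantMap actU actX j)
    {T : Sch k} {φ : M ⨯ T ⟶ X} (hφ : IsEquivariant Ug actX φ) {u : T ⟶ XU}
    (hu : u ≫ j = limitOf z φ) :
    Set.range φ.left.base ⊆ Set.range j.left.base := by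
  rintro _ ⟨x, rfl⟩
  obtain ⟨K, _, _, r, y, rfl⟩ := exists_specOver_point (M ⨯ T) x
  exact range_comp_subset_of_limitOf_eq κ hj hφ hu r ⟨y, rfl⟩

end BB

open BB in
theorem statement_10_general
    (k : Type) [Field k]
    {M : Sch k} (m : MonStr k M) (z : ZeroStr k m) (Ug : UnitGroup k m)
    (κ : Kempf k m z Ug)
    -- an open immersion `j : XU ↪ X` of `G`-schemes:
    {XU X : Sch k} (actU : MonAction k Ug.grp.toMonStr XU)
    (actX : MonAction k Ug.grp.toMonStr X)
    (j : XU ⟶ X) (hj : IsOpenImmersion j.left)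
    (hjequiv : ∀ {T : Sch k} (g : T ⟶ Ug.G) (x : T ⟶ XU),
      actU.smul g x ≫ j = actX.smul g (x ≫ j)) :
    -- the square commutes: composing with `j` sends `U⁺` into `X⁺` and the
    -- limits match …
    (∀ {T : Sch k} (ψ : M ⨯ T ⟶ XU), IsEquivariant Ug actU ψ →
      IsEquivariant Ug actX (ψ ≫ j) ∧
      IsFixedPt Ug actU (limitOf z ψ) ∧
      limitOf z (ψ ≫ j) = limitOf z ψ ≫ j) ∧
    -- … and it is cartesian: a point of `X⁺ ×_{X^G} U^G` comes from a unique
    -- point of `U⁺`: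
    (∀ {T : Sch k} (φ : M ⨯ T ⟶ X), IsEquivariant Ug actX φ →
      ∀ u : T ⟶ XU, IsFixedPt Ug actU u → u ≫ j = limitOf z φ →
      ∃! ψ : M ⨯ T ⟶ XU,
        IsEquivariant Ug actU ψ ∧ ψ ≫ j = φ ∧ limitOf z ψ = u) := by
  have := hj
  have hjG : IsEquivariantMap actU actX j := @hjequiv
  refine ⟨fun ψ hψ ↦ ⟨hψ.comp hjG, isFixedPt_limitOf z hψ, (Category.assoc _ _ _).symm⟩, ?_⟩
  intro T φ hφ u _ hu
  obtain ⟨ψ, hψj⟩ := exists_lift_of_range_subset j φ (range_subset_of_limitOf_eq κ hjG hφ hu)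
  refine ⟨ψ, ⟨IsEquivariant.of_comp hjG (hψj ▸ hφ), hψj, ?_⟩, fun ψ' ⟨_, hψ'j, _⟩ ↦ ?_⟩
  · rw [← cancel_mono j, hu, limitOf, limitOf, Category.assoc, hψj]
  · rw [← cancel_mono j, hψ'j, hψj]

open BB in
/-- Let `Ḡ` (here `M`) be a Kempf monoid with zero over `k`
with unit group `G`, and let `j : U ↪ X` be an open immersion of `G`-schemes.
Then the square

  `U⁺ → U^G`, `U⁺ → X⁺`, `X⁺ → X^G`, `U^G → X^G`

(with horizontal maps the limit maps `i_∞`) is cartesian: stated on the functor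
of points, `U⁺(T)` is in natural bijection with the fiber product
`X⁺(T) ×_{X^G(T)} U^G(T)`. -/
theorem statement_10
    (k : Type) [Field k]
    {M : Sch k} (m : MonStr k M) (z : ZeroStr k m) (Ug : UnitGroup k m)
    (hM : IsAlgMonoid k m) (κ : Kempf k m z Ug)
    -- an open immersion `j : XU ↪ X` of `G`-schemes:
    {XU X : Sch k} (actU : MonAction k Ug.grp.toMonStr XU)
    (actX : MonAction k Ug.grp.toMonStr X)
    (j : XU ⟶ X) (hj : IsOpenImmersion j.left)
    (hjequiv : ∀ {T : Sch k} (g : T ⟶ Ug.G) (x : T ⟶ XU),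
      actU.smul g x ≫ j = actX.smul g (x ≫ j)) :
    -- the square commutes: composing with `j` sends `U⁺` into `X⁺` and the
    -- limits match …
    (∀ {T : Sch k} (ψ : M ⨯ T ⟶ XU), IsEquivariant Ug actU ψ →
      IsEquivariant Ug actX (ψ ≫ j) ∧
      IsFixedPt Ug actU (limitOf z ψ) ∧
      limitOf z (ψ ≫ j) = limitOf z ψ ≫ j) ∧
    -- … and it is cartesian: a point of `X⁺ ×_{X^G} U^G` comes from a unique
    -- point of `U⁺`:
    (∀ {T : Sch k} (φ : M ⨯ T ⟶ X), IsEquivariant Ug actX φ →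
      ∀ u : T ⟶ XU, IsFixedPt Ug actU u → u ≫ j = limitOf z φ →
      ∃! ψ : M ⨯ T ⟶ XU,
        IsEquivariant Ug actU ψ ∧ ψ ≫ j = φ ∧ limitOf z ψ = u) :=
  statement_10_general k m z Ug κ actU actX j hj hjequiv
end
end
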